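/- Let μ : C → D be a pointed modelization functor between J-categories (μ(0) = 0). Then for any object B of C, TC(μ(B)) ≤ TC(B). -/

import Mathlib

open CategoryTheory CategoryTheory.Limits ZeroObject

universe v u v' u'

variable (C : Type u) [Category.{v} C] [HasZeroObject C] [HasZeroMorphisms C]

/-- A category satisfying axioms (J1)-(J4) of Doeraene's J-categories:
a pointed category with fibrations, cofibrations and weak equivalences. -/
structure PreJCat where
  fib : MorphismProperty C
  cofib : MorphismProperty C
  weq : MorphismProperty C
  /-- (J1) isomorphisms are trivial cofibrations -/
  iso_triv_cofib : ∀ {X Y : C} (f : X ⟶ Y), IsIso f → cofib f ∧ weq f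
  /-- (J1) isomorphisms are trivial fibrations -/
  iso_triv_fib : ∀ {X Y : C} (f : X ⟶ Y), IsIso f → fib f ∧ weq f
  fib_comp : ∀ {X Y Z : C} {f : X ⟶ Y} {g : Y ⟶ Z}, fib f → fib g → fib (f ≫ g)
  cofib_comp : ∀ {X Y Z : C} {f : X ⟶ Y} {g : Y ⟶ Z}, cofib f → cofib g → cofib (f ≫ g)
  /-- (J1) two-out-of-three for weak equivalences -/
  weq_comp : ∀ {X Y Z : C} {f : X ⟶ Y} {g : Y ⟶ Z}, weq f → weq g → weq (f ≫ g)
  weq_of_comp_left : ∀ {X Y Z : C} {f : X ⟶ Y} {g : Y ⟶ Z}, weq g → weq (f ≫ g) → weq f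
  weq_of_comp_right : ∀ {X Y Z : C} {f : X ⟶ Y} {g : Y ⟶ Z}, weq f → weq (f ≫ g) → weq g
  /-- (J2) pullbacks of fibrations exist, and the base extension is a fibration -/
  pb_exists : ∀ {E B B' : C} (p : E ⟶ B) (f : B' ⟶ B), fib p →
    ∃ (P : C) (fb : P ⟶ E) (pb : P ⟶ B'), IsPullback fb pb p f ∧ fib pb
  /-- (J2) base extensions of weak equivalences along fibrations are weak equivalences -/
  pb_weq : ∀ {E B B' P : C} {p : E ⟶ B} {f : B' ⟶ B} {fb : P ⟶ E} {pb : P ⟶ B'},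
    fib p → IsPullback fb pb p f → (weq f → weq fb) ∧ (weq p → weq pb)
  /-- (J2) dual: pushouts of cofibrations exist -/
  po_exists : ∀ {A X Y : C} (i : A ⟶ X) (g : A ⟶ Y), cofib i →
    ∃ (Q : C) (inl : X ⟶ Q) (inr : Y ⟶ Q), IsPushout i g inl inr ∧ cofib inr
  po_weq : ∀ {A X Y Q : C} {i : A ⟶ X} {g : A ⟶ Y} {inl : X ⟶ Q} {inr : Y ⟶ Q},
    cofib i → IsPushout i g inl inr → (weq g → weq inl) ∧ (weq i → weq inr)
  /-- (J3) F-factorizations exist -/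
  F_fac : ∀ {X Y : C} (f : X ⟶ Y), ∃ (Z : C) (τ : X ⟶ Z) (q : Z ⟶ Y),
    weq τ ∧ fib q ∧ τ ≫ q = f
  /-- (J3) C-factorizations exist -/
  C_fac : ∀ {X Y : C} (f : X ⟶ Y), ∃ (Z : C) (i : X ⟶ Z) (σ : Z ⟶ Y),
    cofib i ∧ weq σ ∧ i ≫ σ = f
  /-- (J4) cofibrant replacements exist -/
  cof_replace : ∀ X : C, ∃ (Xb : C) (q : Xb ⟶ X), fib q ∧ weq q ∧
    (∀ {E : C} (p : E ⟶ Xb), fib p → weq p → ∃ s : Xb ⟶ E, s ≫ p = 𝟙 Xb)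

variable {C}

namespace PreJCat

/-- An object is a cofibrant model if every trivial fibration onto it admits a section. -/
def CofModel (P : PreJCat C) (X : C) : Prop :=
  ∀ {E : C} (p : E ⟶ X), P.fib p → P.weq p → ∃ s : X ⟶ E, s ≫ p = 𝟙 X

/-- An object is e-fibrant if the morphism to the zero object is a fibration. -/
def EFibrant (P : PreJCat C) (X : C) : Prop := P.fib (0 : X ⟶ 0)

/-- `f` admits a weak lifting along `g` (all objects being cofibrant models). -/
def WeakLifting (P : PreJCat C) {A B Cc : C} (f : A ⟶ B) (g : Cc ⟶ B) : Prop :=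
  ∃ (E : C) (τ : Cc ⟶ E) (q : E ⟶ B), P.weq τ ∧ P.fib q ∧ τ ≫ q = g ∧
    ∃ s : A ⟶ E, s ≫ q = f

/-- `g` admits a weak section. -/
def HasWeakSection (P : PreJCat C) {E B : C} (g : E ⟶ B) : Prop :=
  P.WeakLifting (𝟙 B) g

/-- `j : J ⟶ B` is a join morphism of `f : A ⟶ B` and `g : Cc ⟶ B`: built from an
F-factorization of `g`, a pullback, a C-factorization and a pushout. -/
def IsJoin (P : PreJCat C) {A Cc B J : C} (f : A ⟶ B) (g : Cc ⟶ B) (j : J ⟶ B) : Prop :=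
  ∃ (E : C) (τ : Cc ⟶ E) (q : E ⟶ B), P.weq τ ∧ P.fib q ∧ τ ≫ q = g ∧
  ∃ (E' Z : C) (fbar : E' ⟶ E) (pbar : E' ⟶ A) (i : E' ⟶ Z) (σ : Z ⟶ E)
    (a : A ⟶ J) (bz : Z ⟶ J),
    IsPullback fbar pbar q f ∧ P.cofib i ∧ P.weq σ ∧ i ≫ σ = fbar ∧
    IsPushout pbar i a bz ∧ a ≫ j = f ∧ bz ≫ j = σ ≫ q

/-- `IsIterJoin P p n h` : `h` is an `n`-th iterated join morphism `*ⁿ_B E ⟶ B` of `p`. -/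
inductive IsIterJoin (P : PreJCat C) {E B : C} (p : E ⟶ B) : ℕ → ∀ {X : C}, (X ⟶ B) → Prop
  | zero : IsIterJoin P p 0 p
  | succ {n : ℕ} {X Y : C} {h : X ⟶ B} {h' : Y ⟶ B} :
      IsIterJoin P p n h → P.IsJoin h p h' → IsIterJoin P p (n + 1) h'

/-- The Ganea-type sectional category of a morphism. -/
noncomputable def Gsecat (P : PreJCat C) {E B : C} (p : E ⟶ B) : ℕ∞ :=
  sInf {n : ℕ∞ | ∃ m : ℕ, n = (m : ℕ∞) ∧
    ∃ (X : C) (h : X ⟶ B), P.IsIterJoin p m h ∧ P.HasWeakSection h}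

end PreJCat

/-- `p1, p2` exhibit `Pd` as a binary product of `X` and `Y`. -/
def IsBinProd {X Y Pd : C} (p1 : Pd ⟶ X) (p2 : Pd ⟶ Y) : Prop :=
  Nonempty (IsLimit (BinaryFan.mk p1 p2))

namespace PreJCat

/-- `IsFatWedge P p n j Δ` : `j : Tⁿ(p) ⟶ B^{n+1}` is an `n`-th fat wedge morphism of `p`
together with the diagonal `Δ : B ⟶ B^{n+1}`. -/
inductive IsFatWedge (P : PreJCat C) {E B : C} (p : E ⟶ B) :
    ℕ → ∀ {T Pw : C}, (T ⟶ Pw) → (B ⟶ Pw) → Prop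
  | zero : IsFatWedge P p 0 p (𝟙 B)
  | succ {n : ℕ} {T Pn : C} {j : T ⟶ Pn} {Δ : B ⟶ Pn}
      (hprev : IsFatWedge P p n j Δ)
      {Pn1 : C} {pr1 : Pn1 ⟶ Pn} {pr2 : Pn1 ⟶ B} (hP : IsBinProd pr1 pr2)
      {TB : C} {q1 : TB ⟶ T} {q2 : TB ⟶ B} (hTB : IsBinProd q1 q2)
      {PE : C} {r1 : PE ⟶ Pn} {r2 : PE ⟶ E} (hPE : IsBinProd r1 r2)
      {jB : TB ⟶ Pn1} (hjB : jB ≫ pr1 = q1 ≫ j ∧ jB ≫ pr2 = q2)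
      {pP : PE ⟶ Pn1} (hpP : pP ≫ pr1 = r1 ∧ pP ≫ pr2 = r2 ≫ p)
      {Tn1 : C} {j' : Tn1 ⟶ Pn1} (hjoin : P.IsJoin jB pP j')
      {Δ' : B ⟶ Pn1} (hΔ : Δ' ≫ pr1 = Δ ∧ Δ' ≫ pr2 = 𝟙 B) :
      IsFatWedge P p (n + 1) j' Δ'

/-- The Whitehead-type sectional category of a morphism with e-fibrant codomain. -/
noncomputable def WsecatE (P : PreJCat C) {E B : C} (p : E ⟶ B) : ℕ∞ :=
  sInf {n : ℕ∞ | ∃ m : ℕ, n = (m : ℕ∞) ∧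
    ∃ (T Pw : C) (j : T ⟶ Pw) (Δ : B ⟶ Pw), P.IsFatWedge p m j Δ ∧ P.WeakLifting Δ j}

/-- The Whitehead-type sectional category of an arbitrary morphism, via e-fibrant
replacements of the codomain. -/
noncomputable def Wsecat (P : PreJCat C) {E B : C} (p : E ⟶ B) : ℕ∞ :=
  ⨅ (F : C) (τ : B ⟶ F) (_ : P.weq τ ∧ P.EFibrant F), P.WsecatE (p ≫ τ)

/-- A commutative square is a homotopy pullback. -/
def IsHPB (P : PreJCat C) {D A Cc B : C} (f' : D ⟶ Cc) (g' : D ⟶ A)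
    (g : Cc ⟶ B) (f : A ⟶ B) : Prop :=
  f' ≫ g = g' ≫ f ∧ ∃ (E : C) (τ : Cc ⟶ E) (q : E ⟶ B), P.weq τ ∧ P.fib q ∧ τ ≫ q = g ∧
    ∃ (Pt : C) (pr1 : Pt ⟶ E) (pr2 : Pt ⟶ A), IsPullback pr1 pr2 q f ∧
      ∃ w : D ⟶ Pt, P.weq w ∧ w ≫ pr1 = f' ≫ τ ∧ w ≫ pr2 = g'

/-- A commutative square is a homotopy pushout. -/
def IsHPO (P : PreJCat C) {A B Cc D : C} (f : A ⟶ B) (g : A ⟶ Cc)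
    (i' : B ⟶ D) (j' : Cc ⟶ D) : Prop :=
  f ≫ i' = g ≫ j' ∧ ∃ (Z : C) (i : A ⟶ Z) (σ : Z ⟶ B), P.cofib i ∧ P.weq σ ∧ i ≫ σ = f ∧
    ∃ (Q : C) (inl : Z ⟶ Q) (inr : Cc ⟶ Q), IsPushout i g inl inr ∧
      ∃ w : Q ⟶ D, P.weq w ∧ inl ≫ w = σ ≫ i' ∧ inr ≫ w = j'

/-- `A-A'-B'-B` is a weak pullback over `b : B ⟶ B'` (all objects cofibrant models). -/
def IsWeakPullback (P : PreJCat C) {A B A' B' : C}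
    (f : A ⟶ B) (f' : A' ⟶ B') (b : B ⟶ B') : Prop :=
  ∃ (X : C) (τ : A' ⟶ X) (q : X ⟶ B'), P.weq τ ∧ P.fib q ∧ τ ≫ q = f' ∧
    ∃ x : A ⟶ X, P.IsHPB x f q b

/-- `g : G ⟶ B` is an `n`-th Ganea map of `B`: the `n`-th iterated join of `0 ⟶ B`. -/
def IsGaneaMap (P : PreJCat C) (B : C) (n : ℕ) {G : C} (g : G ⟶ B) : Prop :=
  P.IsIterJoin (0 : (0 : C) ⟶ B) n g

/-- The Lusternik-Schnirelmann category of an object. -/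
noncomputable def catObj (P : PreJCat C) (B : C) : ℕ∞ :=
  sInf {n : ℕ∞ | ∃ m : ℕ, n = (m : ℕ∞) ∧
    ∃ (G : C) (g : G ⟶ B), P.IsGaneaMap B m g ∧ P.HasWeakSection g}

/-- The Lusternik-Schnirelmann category of a morphism `b : B ⟶ B'`:
least `n` such that `b` admits a weak lifting along the `n`-th Ganea map of `B'`. -/
noncomputable def catMor (P : PreJCat C) {B B' : C} (b : B ⟶ B') : ℕ∞ :=
  sInf {n : ℕ∞ | ∃ m : ℕ, n = (m : ℕ∞) ∧
    ∃ (G : C) (g : G ⟶ B'), P.IsGaneaMap B' m g ∧ P.WeakLifting b g}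

/-- One step of a zigzag: a weak equivalence of morphisms in the arrow category. -/
def MorWeqStep (P : PreJCat C) (u v : Arrow C) : Prop :=
  ∃ h : u ⟶ v, P.weq h.left ∧ P.weq h.right

/-- Two morphisms are weakly equivalent: joined by a finite zigzag of weak
equivalences of morphisms. -/
def WeaklyEquivMor (P : PreJCat C) (u v : Arrow C) : Prop :=
  Relation.EqvGen P.MorWeqStep u v

def ObjWeqStep (P : PreJCat C) (X Y : C) : Prop := ∃ f : X ⟶ Y, P.weq f

/-- Two objects are weakly equivalent: joined by a finite zigzag of weak equivalences. -/
def WeaklyEquivObj (P : PreJCat C) (X Y : C) : Prop :=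
  Relation.EqvGen P.ObjWeqStep X Y

/-- The abstract topological complexity of an e-fibrant object:
the sectional category of the diagonal `B ⟶ B × B`. -/
noncomputable def TCE (P : PreJCat C) (B : C) : ℕ∞ :=
  ⨅ (Pd : C) (p1 : Pd ⟶ B) (p2 : Pd ⟶ B) (_ : IsBinProd p1 p2)
    (Δ : B ⟶ Pd) (_ : Δ ≫ p1 = 𝟙 B ∧ Δ ≫ p2 = 𝟙 B), P.Gsecat Δ

/-- The abstract topological complexity of an arbitrary object, via e-fibrant
replacements. -/
noncomputable def TC (P : PreJCat C) (B : C) : ℕ∞ :=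
  ⨅ (F : C) (τ : B ⟶ F) (_ : P.weq τ ∧ P.EFibrant F), P.TCE F

end PreJCat

variable (C)

/-- A J-category: (J1)-(J4) together with the cube axiom (J5). -/
structure JCat extends PreJCat C where
  /-- (J5) the cube axiom: in a commutative cube whose bottom face is a homotopy
  pushout and whose vertical faces are homotopy pullbacks, the top face is a
  homotopy pushout. -/
  cube : ∀ {X00 X01 X10 X11 Y00 Y01 Y10 Y11 : C}
    {tf : X00 ⟶ X01} {tg : X00 ⟶ X10} {ti : X01 ⟶ X11} {tj : X10 ⟶ X11}
    {bf : Y00 ⟶ Y01} {bg : Y00 ⟶ Y10} {bi : Y01 ⟶ Y11} {bj : Y10 ⟶ Y11}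
    {v00 : X00 ⟶ Y00} {v01 : X01 ⟶ Y01} {v10 : X10 ⟶ Y10} {v11 : X11 ⟶ Y11},
    tf ≫ ti = tg ≫ tj →
    toPreJCat.IsHPO bf bg bi bj →
    toPreJCat.IsHPB tf v00 v01 bf →
    toPreJCat.IsHPB tg v00 v10 bg →
    toPreJCat.IsHPB ti v01 v11 bi →
    toPreJCat.IsHPB tj v10 v11 bj →
    toPreJCat.IsHPO tf tg ti tj

variable {C}

/-- A modelization functor: preserves weak equivalences, homotopy pullbacks and
homotopy pushouts. -/
structure ModelizationFunctor {D : Type u'} [Category.{v'} D] [HasZeroObject D]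
    [HasZeroMorphisms D] (P : PreJCat C) (Q : PreJCat D) where
  F : C ⥤ D
  map_weq : ∀ {X Y : C} (f : X ⟶ Y), P.weq f → Q.weq (F.map f)
  map_hpb : ∀ {Dd A Cc B : C} {f' : Dd ⟶ Cc} {g' : Dd ⟶ A} {g : Cc ⟶ B} {f : A ⟶ B},
    P.IsHPB f' g' g f → Q.IsHPB (F.map f') (F.map g') (F.map g) (F.map f)
  map_hpo : ∀ {A B Cc Dd : C} {f : A ⟶ B} {g : A ⟶ Cc} {i' : B ⟶ Dd} {j' : Cc ⟶ Dd},
    P.IsHPO f g i' j' → Q.IsHPO (F.map f) (F.map g) (F.map i') (F.map j')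

/-!
Replace `B` by an e-fibrant `F`. The product `F × F` is the homotopy pullback of `F ⟶ 0 ⟵ F`,
and `μ` preserves homotopy pullbacks and the zero object, so `μ (F × F)` is weakly equivalent to
`F'' × F''` for an e-fibrant replacement `F''` of `μ F`, compatibly with the diagonals. A
modelization functor carries joins to homotopy joins, every homotopy join is weakly equivalent
to a join, and joins of weakly equivalent morphisms are weakly equivalent (gluing and cogluing,
via Brown's lemma). By induction, `μ` of the `n`-th iterated join of `Δ_F` is weakly equivalent
to the `n`-th iterated join of `Δ_{F''}`, and weak sections transfer along such weak
equivalences, so `secat Δ_{F''} ≤ secat Δ_F`.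
-/

set_option linter.unusedSectionVars false

lemma IsBinProd.isPullback_zero {X Y Pd : C} {p₁ : Pd ⟶ X} {p₂ : Pd ⟶ Y}
    (h : IsBinProd p₁ p₂) : IsPullback p₁ p₂ (0 : X ⟶ 0) (0 : Y ⟶ 0) := by
  convert IsPullback.of_is_product' h.some HasZeroObject.zeroIsTerminal <;>
    exact (isZero_zero C).eq_of_tgt _ _

lemma isBinProd_of_isPullback_zero {X Y Pd : C} {p₁ : Pd ⟶ X} {p₂ : Pd ⟶ Y}
    (h : IsPullback p₁ p₂ (0 : X ⟶ 0) (0 : Y ⟶ 0)) : IsBinProd p₁ p₂ :=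
  ⟨isProductOfIsTerminalIsPullback _ _ _ _ HasZeroObject.zeroIsTerminal h.isLimit⟩

namespace PreJCat

variable {P : PreJCat C}

lemma weq_of_isIso {X Y : C} (f : X ⟶ Y) [IsIso f] : P.weq f :=
  (P.iso_triv_fib f inferInstance).2

lemma fib_of_isIso {X Y : C} (f : X ⟶ Y) [IsIso f] : P.fib f :=
  (P.iso_triv_fib f inferInstance).1

lemma cofib_of_isIso {X Y : C} (f : X ⟶ Y) [IsIso f] : P.cofib f :=
  (P.iso_triv_cofib f inferInstance).1

lemma weq_id (X : C) : P.weq (𝟙 X) := weq_of_isIso _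

lemma weq_left_of_comp_eq_id {X Y : C} {f : X ⟶ Y} {g : Y ⟶ X} (hg : P.weq g) (h : f ≫ g = 𝟙 X) :
    P.weq f :=
  P.weq_of_comp_left hg (h ▸ weq_id X)

lemma weq_right_of_comp_eq_id {X Y : C} {f : X ⟶ Y} {g : Y ⟶ X} (hf : P.weq f) (h : f ≫ g = 𝟙 X) :
    P.weq g :=
  P.weq_of_comp_right hf (h ▸ weq_id X)

lemma fib_of_isPullback {E B B' Q : C} {p : E ⟶ B} {f : B' ⟶ B} {fb : Q ⟶ E} {pb : Q ⟶ B'}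
    (hp : P.fib p) (hQ : IsPullback fb pb p f) : P.fib pb := by
  obtain ⟨Q₀, fb₀, pb₀, hQ₀, hpb₀⟩ := P.pb_exists p f hp
  rw [← IsPullback.isoIsPullback_hom_snd E B' hQ hQ₀]
  exact P.fib_comp (fib_of_isIso _) hpb₀

lemma cofib_of_isPushout {A X Y Q : C} {i : A ⟶ X} {g : A ⟶ Y} {inl : X ⟶ Q} {inr : Y ⟶ Q}
    (hi : P.cofib i) (hQ : IsPushout i g inl inr) : P.cofib inr := by
  obtain ⟨Q₀, inl₀, inr₀, hQ₀, hinr₀⟩ := P.po_exists i g hi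
  rw [← IsPushout.inr_isoIsPushout_hom X Y hQ₀ hQ]
  exact P.cofib_comp hinr₀ (cofib_of_isIso _)

lemma isHPB_of_isPullback {E B B' Q : C} {p : E ⟶ B} {f : B' ⟶ B} {fb : Q ⟶ E} {pb : Q ⟶ B'}
    (hp : P.fib p) (hQ : IsPullback fb pb p f) : P.IsHPB fb pb p f :=
  ⟨hQ.w, E, 𝟙 E, p, weq_id _, hp, by simp, Q, fb, pb, hQ, 𝟙 Q, weq_id _, by simp, by simp⟩

lemma isHPO_of_isPushout {A X Y Q : C} {i : A ⟶ X} {g : A ⟶ Y} {inl : X ⟶ Q} {inr : Y ⟶ Q}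
    (hi : P.cofib i) (hQ : IsPushout i g inl inr) : P.IsHPO i g inl inr :=
  ⟨hQ.w, X, i, 𝟙 X, hi, weq_id _, by simp, Q, inl, inr, hQ, 𝟙 Q, weq_id _, by simp, by simp⟩

lemma weq_pullbackMap_of_trivFib {W W' B A Q Q' : C} {k : W ⟶ W'} {r : W' ⟶ B} {f : A ⟶ B}
    {fb : Q ⟶ W} {pb : Q ⟶ A} {fb' : Q' ⟶ W'} {pb' : Q' ⟶ A}
    (hkf : P.fib k) (hkw : P.weq k)
    (hQ : IsPullback fb pb (k ≫ r) f) (hQ' : IsPullback fb' pb' r f)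
    {φ : Q ⟶ Q'} (h₁ : φ ≫ fb' = fb ≫ k) (h₂ : φ ≫ pb' = pb) : P.weq φ := by
  rw [← h₂] at hQ
  exact (P.pb_weq hkf (IsPullback.of_bot hQ h₁.symm hQ')).2 hkw

lemma weq_pushoutMap_of_trivCofib {A W W' Y Q Q' : C} {b : A ⟶ W} {k : W ⟶ W'} {g : A ⟶ Y}
    {inl : W ⟶ Q} {inr : Y ⟶ Q} {inl' : W' ⟶ Q'} {inr' : Y ⟶ Q'}
    (hkc : P.cofib k) (hkw : P.weq k)
    (hQ : IsPushout b g inl inr) (hQ' : IsPushout (b ≫ k) g inl' inr')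
    {φ : Q ⟶ Q'} (h₁ : inl ≫ φ = k ≫ inl') (h₂ : inr ≫ φ = inr') : P.weq φ := by
  rw [← h₂] at hQ'
  exact (P.po_weq hkc (IsPushout.of_left hQ' h₁.symm hQ)).2 hkw

/-- Brown's factorization: `(𝟙, k) : W ⟶ W ×_B W'` factored as a weak equivalence followed by
a fibration. -/
lemma exists_trivFib_span_of_weq {W W' B : C} {k : W ⟶ W'} {p : W ⟶ B} {r : W' ⟶ B}
    (hp : P.fib p) (hr : P.fib r) (hk : P.weq k) (hkr : k ≫ r = p) :
    ∃ (T : C) (ν : W ⟶ T) (η : T ⟶ W) (η' : T ⟶ W'),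
      P.weq ν ∧ P.fib η ∧ P.weq η ∧ P.fib η' ∧ P.weq η' ∧
      ν ≫ η = 𝟙 W ∧ ν ≫ η' = k ∧ η' ≫ r = η ≫ p := by
  obtain ⟨S, s, s', hS, hs'⟩ := P.pb_exists p r hp
  obtain ⟨T, ν, π, hν, hπ, hνπ⟩ := P.F_fac (hS.lift (𝟙 W) k (by simp [hkr]))
  have hν₁ : ν ≫ π ≫ s = 𝟙 W := by rw [reassoc_of% hνπ, hS.lift_fst]
  have hν₂ : ν ≫ π ≫ s' = k := by rw [reassoc_of% hνπ, hS.lift_snd]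
  refine ⟨T, ν, π ≫ s, π ≫ s', hν, P.fib_comp hπ (fib_of_isPullback hr hS.flip),
    P.weq_of_comp_right hν (hν₁ ▸ weq_id W), P.fib_comp hπ hs',
    P.weq_of_comp_right hν (hν₂ ▸ hk), hν₁, hν₂, by simp [hS.w]⟩

/-- The dual factorization of `[k, 𝟙] : W ⊔_A X ⟶ X` as a cofibration followed by a weak
equivalence. -/
lemma exists_trivCofib_cospan_of_weq {A W X : C} {k : W ⟶ X} {b : A ⟶ W} {c : A ⟶ X}
    (hb : P.cofib b) (hc : P.cofib c) (hk : P.weq k) (hbk : b ≫ k = c) :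
    ∃ (T : C) (η : W ⟶ T) (η' : X ⟶ T) (ρ : T ⟶ X),
      P.cofib η ∧ P.weq η ∧ P.cofib η' ∧ P.weq η' ∧ P.weq ρ ∧
      η ≫ ρ = k ∧ η' ≫ ρ = 𝟙 X ∧ b ≫ η = c ≫ η' := by
  obtain ⟨S, s, s', hS, hs'⟩ := P.po_exists b c hb
  obtain ⟨T, ι, ρ, hι, hρ, hιρ⟩ := P.C_fac (hS.desc k (𝟙 X) (by simp [hbk]))
  have hρ₁ : (s ≫ ι) ≫ ρ = k := by rw [Category.assoc, hιρ, hS.inl_desc]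
  have hρ₂ : (s' ≫ ι) ≫ ρ = 𝟙 X := by rw [Category.assoc, hιρ, hS.inr_desc]
  refine ⟨T, s ≫ ι, s' ≫ ι, ρ, P.cofib_comp (cofib_of_isPushout hc hS.flip) hι,
    P.weq_of_comp_left hρ (hρ₁ ▸ hk), P.cofib_comp hs' hι,
    P.weq_of_comp_left hρ (hρ₂ ▸ weq_id X), hρ, hρ₁, hρ₂, by simp [reassoc_of% hS.w]⟩

/-- Brown's lemma. -/
lemma weq_pullbackMap_of_weq_over {W W' B A Q Q' : C} {k : W ⟶ W'} {p : W ⟶ B} {r : W' ⟶ B}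
    {f : A ⟶ B} (hp : P.fib p) (hr : P.fib r) (hk : P.weq k) (hkr : k ≫ r = p)
    {fb : Q ⟶ W} {pb : Q ⟶ A} {fb' : Q' ⟶ W'} {pb' : Q' ⟶ A}
    (hQ : IsPullback fb pb p f) (hQ' : IsPullback fb' pb' r f)
    {φ : Q ⟶ Q'} (h₁ : φ ≫ fb' = fb ≫ k) (h₂ : φ ≫ pb' = pb) : P.weq φ := by
  obtain ⟨T, ν, η, η', hν, hηf, hηw, hη'f, hη'w, hνη, hνη', hηη'⟩ :=
    exists_trivFib_span_of_weq hp hr hk hkr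
  obtain ⟨R, fbR, pbR, hR, -⟩ := P.pb_exists (η ≫ p) f (P.fib_comp hηf hp)
  have hR' : IsPullback fbR pbR (η' ≫ r) f := hηη' ▸ hR
  have hG : P.weq (hQ.lift (fbR ≫ η) pbR (by simpa using hR.w)) :=
    weq_pullbackMap_of_trivFib hηf hηw hR hQ (hQ.lift_fst ..) (hQ.lift_snd ..)
  have hG' : P.weq (hQ'.lift (fbR ≫ η') pbR (by simpa using hR'.w)) :=
    weq_pullbackMap_of_trivFib hη'f hη'w hR' hQ' (hQ'.lift_fst ..) (hQ'.lift_snd ..)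
  set N := hR.lift (fb ≫ ν) pb (by simp [reassoc_of% hνη, hQ.w])
  have hN : P.weq N := weq_left_of_comp_eq_id hG (hQ.hom_ext (by simp [N, hνη])
    (by simp [N]))
  have hφ : φ = N ≫ hQ'.lift (fbR ≫ η') pbR (by simp [hR'.w]) :=
    hQ'.hom_ext (by simp [N, h₁, hνη']) (by simp [N, h₂])
  exact hφ ▸ P.weq_comp hN hG'

/-- The dual of Brown's lemma. -/
lemma weq_pushoutMap_of_weq_under {A W X Y Q Q' : C} {b : A ⟶ W} {c : A ⟶ X} {k : W ⟶ X}
    {g : A ⟶ Y} (hb : P.cofib b) (hc : P.cofib c) (hk : P.weq k) (hbk : b ≫ k = c)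
    {inl : W ⟶ Q} {inr : Y ⟶ Q} {inl' : X ⟶ Q'} {inr' : Y ⟶ Q'}
    (hQ : IsPushout b g inl inr) (hQ' : IsPushout c g inl' inr')
    {φ : Q ⟶ Q'} (h₁ : inl ≫ φ = k ≫ inl') (h₂ : inr ≫ φ = inr') : P.weq φ := by
  obtain ⟨T, η, η', ρ, hηc, hηw, hη'c, hη'w, hρ, hηρ, hη'ρ, hηη'⟩ :=
    exists_trivCofib_cospan_of_weq hb hc hk hbk
  obtain ⟨R, inlR, inrR, hR, -⟩ := P.po_exists (b ≫ η) g (P.cofib_comp hb hηc)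
  have hR' : IsPushout (c ≫ η') g inlR inrR := hηη' ▸ hR
  have hG : P.weq (hQ.desc (η ≫ inlR) inrR (by simpa using hR.w)) :=
    weq_pushoutMap_of_trivCofib hηc hηw hQ hR (hQ.inl_desc ..) (hQ.inr_desc ..)
  have hG' : P.weq (hQ'.desc (η' ≫ inlR) inrR (by simpa using hR'.w)) :=
    weq_pushoutMap_of_trivCofib hη'c hη'w hQ' hR' (hQ'.inl_desc ..) (hQ'.inr_desc ..)
  set N := hR.desc (ρ ≫ inl') inr' (by simp [reassoc_of% hηρ, reassoc_of% hbk, hQ'.w])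
  have hN : P.weq N := weq_right_of_comp_eq_id hG' (hQ'.hom_ext (by simp [N, reassoc_of% hη'ρ])
    (by simp [N]))
  have hφ : φ = hQ.desc (η ≫ inlR) inrR (by simpa using hR.w) ≫ N :=
    hQ.hom_ext (by simp [N, h₁, reassoc_of% hηρ]) (by simp [N, h₂])
  exact hφ ▸ P.weq_comp hG hN

/-- The cogluing lemma. -/
lemma weq_pullbackMap {A B E A' B' E' Q Q' : C} {f : A ⟶ B} {q : E ⟶ B} {f' : A' ⟶ B'}
    {q' : E' ⟶ B'} (hq : P.fib q) (hq' : P.fib q') {a : A ⟶ A'} {b : B ⟶ B'} {e : E ⟶ E'}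
    (ha : P.weq a) (hb : P.weq b) (he : P.weq e) (hqb : q ≫ b = e ≫ q') (hfb : f ≫ b = a ≫ f')
    {fb : Q ⟶ E} {pb : Q ⟶ A} {fb' : Q' ⟶ E'} {pb' : Q' ⟶ A'}
    (hQ : IsPullback fb pb q f) (hQ' : IsPullback fb' pb' q' f')
    {φ : Q ⟶ Q'} (h₁ : φ ≫ fb' = fb ≫ e) (h₂ : φ ≫ pb' = pb ≫ a) : P.weq φ := by
  obtain ⟨W, fbW, pbW, hW, hpbW⟩ := P.pb_exists q' b hq'
  set k := hW.lift e q hqb.symm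
  have hk : P.weq k := P.weq_of_comp_left ((P.pb_weq hq' hW).1 hb) (by simpa [k] using he)
  obtain ⟨V, fbV, pbV, hV, -⟩ := P.pb_exists pbW f hpbW
  set ψ := hV.lift (fb ≫ k) pb (by simp [k, hQ.w])
  have hψ : P.weq ψ :=
    weq_pullbackMap_of_weq_over hq hpbW hk (hW.lift_snd ..) hQ hV (hV.lift_fst ..) (hV.lift_snd ..)
  -- `V ⟶ Q'` is the base change of `a` along the fibration `pb'`
  have hVQ' : IsPullback (fbV ≫ fbW) pbV q' (a ≫ f') := hfb ▸ hV.paste_horiz hW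
  have hχ := (P.pb_weq (fib_of_isPullback hq' hQ') (hVQ'.of_right' hQ')).1 ha
  have hφ : φ = ψ ≫ hQ'.lift (fbV ≫ fbW) (pbV ≫ a) (by simp [hVQ'.w]) :=
    hQ'.hom_ext (by simp [ψ, k, h₁]) (by simp [ψ, h₂])
  exact hφ ▸ P.weq_comp hψ hχ

/-- The gluing lemma. -/
lemma weq_pushoutMap {A X Y A' X' Y' Q Q' : C} {i : A ⟶ X} {g : A ⟶ Y} {i' : A' ⟶ X'}
    {g' : A' ⟶ Y'} (hi : P.cofib i) (hi' : P.cofib i') {a : A ⟶ A'} {x : X ⟶ X'} {y : Y ⟶ Y'}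
    (ha : P.weq a) (hx : P.weq x) (hy : P.weq y) (hix : i ≫ x = a ≫ i') (hgy : g ≫ y = a ≫ g')
    {inl : X ⟶ Q} {inr : Y ⟶ Q} {inl' : X' ⟶ Q'} {inr' : Y' ⟶ Q'}
    (hQ : IsPushout i g inl inr) (hQ' : IsPushout i' g' inl' inr')
    {φ : Q ⟶ Q'} (h₁ : inl ≫ φ = x ≫ inl') (h₂ : inr ≫ φ = y ≫ inr') : P.weq φ := by
  obtain ⟨W, wa, a₁, hW, ha₁⟩ := P.po_exists i a hi
  set k := hW.desc x i' hix
  have hk : P.weq k := P.weq_of_comp_right ((P.po_weq hi hW).1 ha) (by simpa [k] using hx)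
  obtain ⟨V, mW, mY, hV, -⟩ := P.po_exists a₁ g' ha₁
  set ψ := hV.desc (k ≫ inl') inr' (by simp [k, hQ'.w])
  have hψ : P.weq ψ :=
    weq_pushoutMap_of_weq_under ha₁ hi' hk (hW.inr_desc ..) hV hQ' (hV.inl_desc ..) (hV.inr_desc ..)
  -- `Q ⟶ V` is the cobase change of `y` along the cofibration `inr`
  have hQV : IsPushout i (g ≫ y) (wa ≫ mW) mY := hgy ▸ hW.paste_vert hV
  have hχ := (P.po_weq (cofib_of_isPushout hi hQ) (hQV.of_top' hQ)).1 hy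
  have hφ : φ = hQ.desc (wa ≫ mW) (y ≫ mY) (by simpa using hQV.w) ≫ ψ :=
    hQ.hom_ext (by simp [ψ, k, h₁]) (by simp [ψ, h₂])
  exact hφ ▸ P.weq_comp hχ hψ

lemma exists_weq_over_of_weq_comp_eq {X B E E' : C} {τ : X ⟶ E} {q : E ⟶ B} {τ' : X ⟶ E'}
    {q' : E' ⟶ B} (hτ : P.weq τ) (hτ' : P.weq τ') (hq' : P.fib q') (h : τ ≫ q = τ' ≫ q')
    (hE : P.CofModel E) : ∃ φ : E ⟶ E', P.weq φ ∧ φ ≫ q' = q := by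
  obtain ⟨R, fbR, pbR, hR, -⟩ := P.pb_exists q' q hq'
  obtain ⟨W, ν, π, hν, hπ, hνπ⟩ := P.F_fac (hR.lift τ' τ h.symm)
  have hπR : P.weq (π ≫ pbR) :=
    P.weq_of_comp_right hν (by simpa [reassoc_of% hνπ] using hτ)
  obtain ⟨s, hs⟩ := hE (π ≫ pbR) (P.fib_comp hπ (fib_of_isPullback hq' hR)) hπR
  refine ⟨s ≫ π ≫ fbR, P.weq_comp (weq_left_of_comp_eq_id hπR hs) ?_, ?_⟩
  · exact P.weq_of_comp_right hν (by simpa [reassoc_of% hνπ] using hτ')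
  · rw [Category.assoc, Category.assoc, hR.w, reassoc_of% hs]

lemma exists_weq_comp_eq_of_weq_square {G G'' E B : C} {k : G ⟶ E} {σ : G ⟶ G''} {q : E ⟶ B}
    {g : G'' ⟶ B} (hcof : ∀ X : C, P.CofModel X) (hk : P.weq k) (hσ : P.weq σ) (hq : P.fib q)
    (h : k ≫ q = σ ≫ g) : ∃ τ : G'' ⟶ E, P.weq τ ∧ τ ≫ q = g := by
  obtain ⟨E₀, τ₀, q₀, hτ₀, -, hτ₀q₀⟩ := P.F_fac g
  obtain ⟨θ, hθ, hθq⟩ := exists_weq_over_of_weq_comp_eq (P.weq_comp hσ hτ₀) hk hq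
    (by rw [Category.assoc, hτ₀q₀, h]) (hcof E₀)
  exact ⟨τ₀ ≫ θ, P.weq_comp hτ₀ hθ, by rw [Category.assoc, hθq, hτ₀q₀]⟩

lemma exists_section_of_weq_comp {A B E : C} {q : E ⟶ B} {r : A ⟶ E} (hq : P.fib q)
    (hr : P.weq (r ≫ q)) (hB : P.CofModel B) : ∃ s : B ⟶ E, s ≫ q = 𝟙 B := by
  obtain ⟨V, ν, π, hν, hπ, hνπ⟩ := P.F_fac r
  obtain ⟨s, hs⟩ := hB (π ≫ q) (P.fib_comp hπ hq)
    (P.weq_of_comp_right hν (by rwa [← Category.assoc, hνπ]))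
  exact ⟨s ≫ π, by rw [Category.assoc, hs]⟩

def WeqSpanOver (P : PreJCat C) {X B X' B' : C} (ω : B ⟶ B') (f : X ⟶ B) (f' : X' ⟶ B') :
    Prop :=
  ∃ (M : C) (m : M ⟶ X) (m' : M ⟶ X'), P.weq m ∧ P.weq m' ∧ m ≫ f ≫ ω = m' ≫ f'

lemma WeqSpanOver.of_weq_comp {X Y B X' B' : C} {ω : B ⟶ B'} {κ : Y ⟶ X} {f : X ⟶ B}
    {f' : X' ⟶ B'} (hκ : P.weq κ) (h : P.WeqSpanOver ω (κ ≫ f) f') : P.WeqSpanOver ω f f' := by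
  obtain ⟨M, m, m', hm, hm', hmm'⟩ := h
  exact ⟨M, m ≫ κ, m', P.weq_comp hm hκ, hm', by simpa using hmm'⟩

lemma HasWeakSection.of_weqSpanOver {X B X' B' : C} {ω : B ⟶ B'} {h : X ⟶ B} {h' : X' ⟶ B'}
    (hcof : ∀ X : C, P.CofModel X) (hω : P.weq ω) (hh : P.HasWeakSection h)
    (hs : P.WeqSpanOver ω h h') : P.HasWeakSection h' := by
  obtain ⟨E, τ, q, hτ, hq, hτq, s, hs'⟩ := hh
  obtain ⟨M, m, m', hm, hm', hmm'⟩ := hs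
  obtain ⟨E', τ', q', hτ', hq', hτ'q'⟩ := P.F_fac h'
  obtain ⟨R, fbR, pbR, hR, hpbR⟩ := P.pb_exists q' ω hq'
  have hfbR : P.weq fbR := (P.pb_weq hq' hR).1 hω
  set u := hR.lift (m' ≫ τ') (m ≫ h) (by simp [hτ'q', hmm'])
  have hu : P.weq u :=
    P.weq_of_comp_left hfbR (by simpa [u] using P.weq_comp hm' hτ')
  obtain ⟨ψ, hψ, hψpbR⟩ :=
    exists_weq_over_of_weq_comp_eq (P.weq_comp hm hτ) hu hpbR
      (by rw [Category.assoc, hτq, hR.lift_snd]) (hcof E)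
  have hr : (s ≫ ψ ≫ fbR) ≫ q' = ω := by
    simp only [Category.assoc, hR.w]
    rw [reassoc_of% hψpbR, reassoc_of% hs']
  obtain ⟨s', hs''⟩ := exists_section_of_weq_comp hq' (hr ▸ hω) (hcof B')
  exact ⟨E', τ', q', hτ', hq', hτ'q', s', hs''⟩

/-- `IsJoin` with the pullback and the pushout weakened to a homotopy pullback and a homotopy
pushout, and `q` not required to be a fibration: the shape in which a modelization functor
carries a join. -/
def IsHJoin (P : PreJCat C) {A Cc B J : C} (f : A ⟶ B) (g : Cc ⟶ B) (j : J ⟶ B) : Prop :=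
  ∃ (E : C) (τ : Cc ⟶ E) (q : E ⟶ B), P.weq τ ∧ τ ≫ q = g ∧
  ∃ (E' Z : C) (fbar : E' ⟶ E) (pbar : E' ⟶ A) (i : E' ⟶ Z) (σ : Z ⟶ E)
    (a : A ⟶ J) (bz : Z ⟶ J),
    P.IsHPB fbar pbar q f ∧ P.weq σ ∧ i ≫ σ = fbar ∧
    P.IsHPO i pbar bz a ∧ a ≫ j = f ∧ bz ≫ j = σ ≫ q

lemma IsJoin.isHJoin {A Cc B J : C} {f : A ⟶ B} {g : Cc ⟶ B} {j : J ⟶ B}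
    (h : P.IsJoin f g j) : P.IsHJoin f g j := by
  obtain ⟨E, τ, q, hτ, hq, hτq, E', Z, fbar, pbar, i, σ, a, bz, hpb, hi, hσ, hiσ, hpo, ha, hbz⟩ :=
    h
  exact ⟨E, τ, q, hτ, hτq, E', Z, fbar, pbar, i, σ, a, bz, isHPB_of_isPullback hq hpb, hσ, hiσ,
    isHPO_of_isPushout hi hpo.flip, ha, hbz⟩

lemma IsHJoin.exists_isJoin {A Cc B J : C} {f : A ⟶ B} {g : Cc ⟶ B} {j : J ⟶ B}
    (h : P.IsHJoin f g j) : ∃ (J₁ : C) (κ : J₁ ⟶ J), P.weq κ ∧ P.IsJoin f g (κ ≫ j) := by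
  obtain ⟨E, τ, q, hτ, hτq, E', Z, fbar, pbar, i, σ, a, b, hpb, hσ, hiσ, hpo, ha, hb⟩ := h
  obtain ⟨-, E₁, τ₁, q₁, hτ₁, hq₁, hτ₁q₁, Pt, u, v, hPt, w, hw, hwu, hwv⟩ := hpb
  obtain ⟨hib, Z₀, i₀, σ₀, hi₀, hσ₀, hi₀σ₀, Q₀, inl₀, inr₀, hQ₀, w₀, hw₀, hw₀l, hw₀r⟩ := hpo
  -- replace the source `E'` of the pushout by the strict pullback `Pt`
  obtain ⟨Zw, inlw, inrw, hZw, hinrw⟩ := P.po_exists i₀ w hi₀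
  have hinlw : P.weq inlw := (P.po_weq hi₀ hZw).1 hw
  set χ := hZw.desc (σ₀ ≫ σ ≫ τ₁) u (by rw [reassoc_of% hi₀σ₀, reassoc_of% hiσ, hwu])
  have hχ : P.weq χ := P.weq_of_comp_right hinlw
    (by simpa [χ] using P.weq_comp hσ₀ (P.weq_comp hσ hτ₁))
  obtain ⟨Q₁, inl₁, inr₁, hQ₁, -⟩ := P.po_exists inrw v hinrw
  set ϑ := hZw.desc (σ₀ ≫ b) (v ≫ a) (by rw [reassoc_of% hi₀σ₀, hib, reassoc_of% hwv])
  set κ := hQ₁.desc ϑ a (hZw.inr_desc ..)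
  set γ := hQ₀.desc (inlw ≫ inl₁) inr₁ (by rw [reassoc_of% hZw.w, hQ₁.w, reassoc_of% hwv])
  have hγ : P.weq γ := weq_pushoutMap hi₀ hinrw hw hinlw (weq_id A) hZw.w
    (by rw [Category.comp_id, hwv]) hQ₀ hQ₁ (hQ₀.inl_desc ..) (by simp [γ])
  have hγκ : γ ≫ κ = w₀ := hQ₀.hom_ext (by simp [γ, κ, ϑ, hw₀l]) (by simp [γ, κ, hw₀r])
  have hϑ : ϑ ≫ j = χ ≫ q₁ := hZw.hom_ext (by simp [ϑ, χ, hb, hτ₁q₁])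
    (by simp [ϑ, χ, ha, hPt.w])
  refine ⟨Q₁, κ, P.weq_of_comp_right hγ (hγκ ▸ hw₀), E₁, τ ≫ τ₁, q₁, P.weq_comp hτ hτ₁, hq₁,
    by rw [Category.assoc, hτ₁q₁, hτq], Pt, Zw, u, v, inrw, χ, inr₁, inl₁, hPt, hinrw, hχ,
    hZw.inr_desc .., hQ₁.flip, by simp [κ, ha], by simp [κ, hϑ]⟩

lemma exists_weqSpan_of_isPullback {A B E A'' B'' E'' M Q Q'' : C} {f : A ⟶ B} {q : E ⟶ B}
    {f'' : A'' ⟶ B''} {q'' : E'' ⟶ B''} (hq : P.fib q) (hq'' : P.fib q'')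
    {ω : B ⟶ B''} {ν : E ⟶ E''} {m : M ⟶ A} {m'' : M ⟶ A''}
    (hω : P.weq ω) (hν : P.weq ν) (hm : P.weq m) (hm'' : P.weq m'')
    (hqω : q ≫ ω = ν ≫ q'') (hmm'' : m ≫ f ≫ ω = m'' ≫ f'')
    {fb : Q ⟶ E} {pb : Q ⟶ A} {fb'' : Q'' ⟶ E''} {pb'' : Q'' ⟶ A''}
    (hQ : IsPullback fb pb q f) (hQ'' : IsPullback fb'' pb'' q'' f'') :
    ∃ (N : C) (φ : N ⟶ Q) (φ'' : N ⟶ Q'') (p : N ⟶ M), P.weq φ ∧ P.weq φ'' ∧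
      φ ≫ pb = p ≫ m ∧ φ'' ≫ pb'' = p ≫ m'' ∧ φ ≫ fb ≫ ν = φ'' ≫ fb'' := by
  obtain ⟨N, fbN, pbN, hN, -⟩ := P.pb_exists q (m ≫ f) hq
  have hφ : P.weq (hQ.lift fbN (pbN ≫ m) (by simp [hN.w])) :=
    weq_pullbackMap hq hq hm (weq_id B) (weq_id E) (by simp) (by simp) hN hQ (by simp) (by simp)
  have hφ'' : P.weq (hQ''.lift (fbN ≫ ν) (pbN ≫ m'') (by simp [← hqω, reassoc_of% hN.w, hmm''])) :=
    weq_pullbackMap hq hq'' hm'' hω hν hqω (by simpa using hmm'') hN hQ'' (by simp) (by simp)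
  exact ⟨N, _, _, pbN, hφ, hφ'', by simp, by simp, by simp⟩

lemma IsJoin.exists_isJoin_of_weqSpanOver {A Cc B J A'' Cc'' B'' : C} {f : A ⟶ B} {g : Cc ⟶ B}
    {j : J ⟶ B} {f'' : A'' ⟶ B''} {g'' : Cc'' ⟶ B''} {ω : B ⟶ B''}
    (hcof : ∀ X : C, P.CofModel X) (hω : P.weq ω) (h : P.IsJoin f g j)
    (hf : P.WeqSpanOver ω f f'') (hg : P.WeqSpanOver ω g g'') :
    ∃ (J'' : C) (j'' : J'' ⟶ B''), P.IsJoin f'' g'' j'' ∧ P.WeqSpanOver ω j j'' := by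
  obtain ⟨E, τ, q, hτ, hq, hτq, E', Z, fbar, pbar, i, σ, a, b, hpb, hi, hσ, hiσ, hpo, ha, hb⟩ :=
    h
  obtain ⟨M, m, m'', hm, hm'', hmm''⟩ := hf
  obtain ⟨G, n, n'', hn, hn'', hnn''⟩ := hg
  obtain ⟨E'', ν, q'', hν, hq'', hνq''⟩ := P.F_fac (q ≫ ω)
  have hnq'' : (n ≫ τ ≫ ν) ≫ q'' = n'' ≫ g'' := by
    simp only [Category.assoc, hνq'']
    rw [reassoc_of% hτq, hnn'']
  obtain ⟨τ'', hτ'', hτ''q''⟩ := exists_weq_comp_eq_of_weq_square hcof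
    (P.weq_comp hn (P.weq_comp hτ hν)) hn'' hq'' hnq''
  obtain ⟨E₂, fbar'', pbar'', hpb'', -⟩ := P.pb_exists q'' f'' hq''
  obtain ⟨N, φ, φ'', p, hφ, hφ'', hφp, hφ''p, hφφ''⟩ :=
    exists_weqSpan_of_isPullback hq hq'' hω hν hm hm'' hνq''.symm hmm'' hpb hpb''
  -- a common cofibration `iZ` out of the apex `N` of the span of pullbacks
  obtain ⟨Zh, iZ, ξ, hiZ, hξ, hiZξ⟩ := P.C_fac (φ ≫ i)
  obtain ⟨S, inlS, inrS, hS, hinrS⟩ := P.po_exists iZ φ'' hiZ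
  have hinlS : P.weq inlS := (P.po_weq hiZ hS).1 hφ''
  set σ'' := hS.desc (ξ ≫ σ ≫ ν) fbar'' (by rw [reassoc_of% hiZξ, reassoc_of% hiσ, hφφ''])
  have hσ'' : P.weq σ'' := P.weq_of_comp_right hinlS
    (by simpa [σ''] using P.weq_comp hξ (P.weq_comp hσ hν))
  obtain ⟨J'', b'', a'', hJ'', -⟩ := P.po_exists inrS pbar'' hinrS
  set j'' := hJ''.desc (σ'' ≫ q'') f'' (by rw [hS.inr_desc_assoc, hpb''.w])
  obtain ⟨Pa, inlPa, inrPa, hPa, -⟩ := P.po_exists iZ p hiZ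
  have hδ : P.weq (hPa.desc (ξ ≫ b) (m ≫ a) (by rw [reassoc_of% hiZξ, ← hpo.w, reassoc_of% hφp])) :=
    weq_pushoutMap hiZ hi hφ hξ hm hiZξ hφp.symm hPa hpo.flip (by simp) (by simp)
  have hδ'' : P.weq (hPa.desc (inlS ≫ b'') (m'' ≫ a'')
      (by rw [reassoc_of% hS.w, hJ''.w, reassoc_of% hφ''p])) :=
    weq_pushoutMap hiZ hinrS hφ'' hinlS hm'' hS.w hφ''p.symm hPa hJ'' (by simp) (by simp)
  refine ⟨J'', j'', ⟨E'', τ'', q'', hτ'', hq'', hτ''q'', E₂, S, fbar'', pbar'', inrS, σ'', a'', b'',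
      hpb'', hinrS, hσ'', hS.inr_desc .., hJ''.flip, hJ''.inr_desc .., hJ''.inl_desc ..⟩,
      Pa, _, _, hδ, hδ'', hPa.hom_ext ?_ ?_⟩
  · simp [j'', σ'', reassoc_of% hb, hνq'']
  · simp [j'', reassoc_of% ha, hmm'']

lemma eFibrant_of_fib_of_isZero {X Y : C} {q : X ⟶ Y} (hq : P.fib q) (hY : IsZero Y) :
    P.EFibrant X := by
  rw [EFibrant, (isZero_zero C).eq_of_tgt 0 (q ≫ hY.isoZero.hom)]
  exact P.fib_comp hq (fib_of_isIso _)

lemma Gsecat_le {E B X : C} {p : E ⟶ B} {n : ℕ} {h : X ⟶ B} (hh : P.IsIterJoin p n h)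
    (hs : P.HasWeakSection h) : P.Gsecat p ≤ n :=
  sInf_le ⟨n, rfl, X, h, hh, hs⟩

lemma TCE_le_Gsecat {B Pd : C} {p₁ p₂ : Pd ⟶ B} (hprod : IsBinProd p₁ p₂) {Δ : B ⟶ Pd}
    (hΔ : Δ ≫ p₁ = 𝟙 B ∧ Δ ≫ p₂ = 𝟙 B) : P.TCE B ≤ P.Gsecat Δ :=
  iInf_le_of_le Pd <| iInf_le_of_le p₁ <| iInf_le_of_le p₂ <| iInf_le_of_le hprod <|
    iInf_le_of_le Δ <| iInf_le _ hΔ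

lemma TC_le_TCE {B F : C} {τ : B ⟶ F} (hτ : P.weq τ) (hF : P.EFibrant F) : P.TC B ≤ P.TCE F :=
  iInf_le_of_le F <| iInf_le_of_le τ <| iInf_le _ ⟨hτ, hF⟩

end PreJCat

namespace ModelizationFunctor

open PreJCat

variable {D : Type u'} [Category.{v'} D] [HasZeroObject D] [HasZeroMorphisms D]
  {P : PreJCat C} {Q : PreJCat D} (μ : ModelizationFunctor P Q)

lemma map_isHJoin {A Cc B J : C} {f : A ⟶ B} {g : Cc ⟶ B} {j : J ⟶ B} (h : P.IsHJoin f g j) :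
    Q.IsHJoin (μ.F.map f) (μ.F.map g) (μ.F.map j) := by
  obtain ⟨E, τ, q, hτ, hτq, E', Z, fbar, pbar, i, σ, a, b, hpb, hσ, hiσ, hpo, ha, hb⟩ := h
  exact ⟨_, μ.F.map τ, μ.F.map q, μ.map_weq _ hτ, by rw [← μ.F.map_comp, hτq], _, _,
    μ.F.map fbar, μ.F.map pbar, μ.F.map i, μ.F.map σ, μ.F.map a, μ.F.map b, μ.map_hpb hpb,
    μ.map_weq _ hσ, by rw [← μ.F.map_comp, hiσ], μ.map_hpo hpo,
    by rw [← μ.F.map_comp, ha], by rw [← μ.F.map_comp, ← μ.F.map_comp, hb]⟩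

lemma hasWeakSection_map {E B : C} {h : E ⟶ B} (hh : P.HasWeakSection h) :
    Q.HasWeakSection (μ.F.map h) := by
  obtain ⟨E', τ, q, hτ, -, hτq, s, hs⟩ := hh
  obtain ⟨E'', τ', q', hτ', hq', hτ'q'⟩ := Q.F_fac (μ.F.map q)
  refine ⟨E'', μ.F.map τ ≫ τ', q', Q.weq_comp (μ.map_weq _ hτ) hτ', hq', ?_, μ.F.map s ≫ τ', ?_⟩
  · rw [Category.assoc, hτ'q', ← μ.F.map_comp, hτq]
  · rw [Category.assoc, hτ'q', ← μ.F.map_comp, hs, μ.F.map_id]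

lemma exists_isIterJoin_weqSpanOver (hcof : ∀ X : D, Q.CofModel X) {E B : C} {p : E ⟶ B}
    {E'' B'' : D} {p'' : E'' ⟶ B''} {ω : μ.F.obj B ⟶ B''} (hω : Q.weq ω)
    (hp : Q.WeqSpanOver ω (μ.F.map p) p'') {n : ℕ} {X : C} {h : X ⟶ B}
    (hh : P.IsIterJoin p n h) :
    ∃ (X'' : D) (h'' : X'' ⟶ B''), Q.IsIterJoin p'' n h'' ∧ Q.WeqSpanOver ω (μ.F.map h) h'' := by
  induction hh with
  | zero => exact ⟨_, _, .zero, hp⟩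
  | succ _ hjoin ih =>
    obtain ⟨X'', h'', hh'', hs⟩ := ih
    obtain ⟨J₁, κ, hκ, hJ₁⟩ := (μ.map_isHJoin hjoin.isHJoin).exists_isJoin
    obtain ⟨J'', j'', hj'', hs'⟩ := hJ₁.exists_isJoin_of_weqSpanOver hcof hω hs hp
    exact ⟨J'', j'', hh''.succ hj'', hs'.of_weq_comp hκ⟩

lemma exists_diag_weqSpanOver (hz : IsZero (μ.F.obj 0)) {F Pd : C} {p₁ p₂ : Pd ⟶ F}
    {Δ : F ⟶ Pd} (hF : P.EFibrant F) (hprod : IsBinProd p₁ p₂)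
    (hΔ : Δ ≫ p₁ = 𝟙 F ∧ Δ ≫ p₂ = 𝟙 F) :
    ∃ (F'' : D) (τ : μ.F.obj F ⟶ F'') (P'' : D) (π₁ π₂ : P'' ⟶ F'') (Δ'' : F'' ⟶ P'')
      (ω : μ.F.obj Pd ⟶ P''), Q.weq τ ∧ Q.EFibrant F'' ∧ IsBinProd π₁ π₂ ∧
      (Δ'' ≫ π₁ = 𝟙 F'' ∧ Δ'' ≫ π₂ = 𝟙 F'') ∧ Q.weq ω ∧ Q.WeqSpanOver ω (μ.F.map Δ) Δ'' := by
  obtain ⟨-, F'', τ, q, hτ, hq, -, Pt, pr₁, pr₂, hPt, w, hw, hw₁, hw₂⟩ :=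
    μ.map_hpb (isHPB_of_isPullback hF hprod.isPullback_zero)
  have hF'' : Q.EFibrant F'' := eFibrant_of_fib_of_isZero hq hz
  obtain ⟨P'', π₁, π₂, hP'', -⟩ := Q.pb_exists (0 : F'' ⟶ 0) 0 hF''
  set ω' := hP''.lift pr₁ (pr₂ ≫ τ) ((isZero_zero D).eq_of_tgt _ _)
  have hω' : Q.weq ω' := weq_pullbackMap hq hF'' hτ (weq_of_isIso hz.isoZero.hom) (weq_id F'')
    ((isZero_zero D).eq_of_tgt _ _) ((isZero_zero D).eq_of_tgt _ _) hPt hP'' (by simp [ω'])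
    (by simp [ω'])
  refine ⟨F'', τ, P'', π₁, π₂, hP''.lift (𝟙 F'') (𝟙 F'') rfl, w ≫ ω', hτ, hF'',
    isBinProd_of_isPullback_zero hP'', by simp, Q.weq_comp hw hω',
    μ.F.obj F, 𝟙 _, τ, weq_id _, hτ, hP''.hom_ext ?_ ?_⟩
  · simp [ω', hw₁, ← Functor.map_comp_assoc, hΔ.1]
  · simp [ω', reassoc_of% hw₂, ← Functor.map_comp_assoc, hΔ.2]

end ModelizationFunctor

theorem TC_map_le_general {D : Type u'} [Category.{v'} D] [HasZeroObject D]
    [HasZeroMorphisms D]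
    (J : JCat C) (K : JCat D)
    (hd : ∀ X : D, K.toPreJCat.CofModel X)
    (μ : ModelizationFunctor J.toPreJCat K.toPreJCat)
    (hz : IsZero (μ.F.obj (0 : C)))
    (B : C) :
    K.toPreJCat.TC (μ.F.obj B) ≤ J.toPreJCat.TC B := by
  refine le_iInf fun F => le_iInf fun τ => le_iInf fun ⟨hτ, hF⟩ => ?_
  refine le_iInf fun Pd => le_iInf fun p₁ => le_iInf fun p₂ => le_iInf fun hprod =>
    le_iInf fun Δ => le_iInf fun hΔ => le_sInf ?_
  rintro _ ⟨n, rfl, X, h, hh, hs⟩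
  obtain ⟨F'', τ'', P'', π₁, π₂, Δ'', ω, hτ'', hF'', hprod'', hΔ'', hω, hΔω⟩ :=
    μ.exists_diag_weqSpanOver hz hF hprod hΔ
  obtain ⟨X'', h'', hh'', hhω⟩ := μ.exists_isIterJoin_weqSpanOver hd hω hΔω hh
  calc K.TC (μ.F.obj B) ≤ K.TCE F'' := PreJCat.TC_le_TCE (K.weq_comp (μ.map_weq _ hτ) hτ'') hF''
    _ ≤ K.Gsecat Δ'' := PreJCat.TCE_le_Gsecat hprod'' hΔ''
    _ ≤ n := PreJCat.Gsecat_le hh'' ((μ.hasWeakSection_map hs).of_weqSpanOver hd hω hhω)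

/-- For a pointed modelization functor `μ` between J-categories,
`TC (μ B) ≤ TC B`. -/
theorem TC_map_le {D : Type u'} [Category.{v'} D] [HasZeroObject D]
    [HasZeroMorphisms D]
    (J : JCat C) (K : JCat D)
    (hc : ∀ X : C, J.toPreJCat.CofModel X)
    (hd : ∀ X : D, K.toPreJCat.CofModel X)
    (μ : ModelizationFunctor J.toPreJCat K.toPreJCat)
    (hz : IsZero (μ.F.obj (0 : C)))
    (B : C) :
    K.toPreJCat.TC (μ.F.obj B) ≤ J.toPreJCat.TC B :=
  TC_map_le_general J K hd μ hz B
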